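/- (Semi-Schanuel, homomorphic version.) Let P, M, P', M' be modules with negation carrying surpassing relations. Let f : P → M, f' : P' → M' and μ : M → M' be homomorphisms such that for every y in the respective target there exists x with y ≼ f(x) (respectively y ≼ f'(x), y ≼ μ(x)), and let μ̃ : P → P' be a homomorphism with μ(f(b)) ≼ f'(μ̃(b)) for all b ∈ P. Set K = {b ∈ P : 0 ≼ f(b)} and K' = {c ∈ P' : 0 ≼ f'(c)}. Then: (1) the map g : K' × P → P' given by g(c,b) = μ̃(b)(-)c respects addition and negation componentwise, and for every b' ∈ P' there exists b ∈ P such that μ̃(b)(-)b' ∈ K' and b' ≼ g(μ̃(b)(-)b', b); (2) setting K'' = {(c,b) ∈ K' × P : 0 ≼ g(c,b) and c ≼ μ̃(b)}, the map Φ : K → K'', Φ(b) = (μ̃(b), b), is well defined; the projection Φ'(c,b) = b satisfies Φ'(Φ(b)) = b for all b ∈ K, and Φ(Φ'(c,b)) ≽ (c,b) componentwise for all (c,b) ∈ K'' (so Φ is a ≼-isomorphism onto K''). -/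

import Mathlib

/-- A module with negation carrying a surpassing relation: an additive
commutative monoid with an additive monoid automorphism `neg` of order ≤ 2,
and a preorder `le` (the surpassing relation ≼) satisfying 0 ≼ c°, and
compatibility with the negation and with addition. -/
structure NegModule (M : Type*) [AddCommMonoid M] where
  neg : M → M
  neg_add : ∀ a b : M, neg (a + b) = neg a + neg b
  neg_zero : neg 0 = 0
  neg_neg : ∀ a : M, neg (neg a) = a
  le : M → M → Prop
  le_refl : ∀ a : M, le a a
  le_trans : ∀ a b c : M, le a b → le b c → le a c
  zero_le_circ : ∀ c : M, le 0 (c + neg c)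
  le_neg : ∀ a b : M, le a b → le (neg a) (neg b)
  le_add : ∀ a b a' b' : M, le a b → le a' b' → le (a + a') (b + b')

/-- A ≼-morphism of modules with negation carrying surpassing relations. -/
def IsPrecMorphism {M N : Type*} [AddCommMonoid M] [AddCommMonoid N]
    (SM : NegModule M) (SN : NegModule N) (f : M → N) : Prop :=
  f 0 = 0 ∧ (∀ b : M, f (SM.neg b) = SN.neg (f b)) ∧
    (∀ b b' : M, SN.le (f (b + b')) (f b + f b')) ∧
    (∀ b b' : M, SM.le b b' → SN.le (f b) (f b'))

/-- A homomorphism of modules with negation carrying surpassing relations. -/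
def IsNegHom {M N : Type*} [AddCommMonoid M] [AddCommMonoid N]
    (SM : NegModule M) (SN : NegModule N) (f : M → N) : Prop :=
  f 0 = 0 ∧ (∀ b : M, f (SM.neg b) = SN.neg (f b)) ∧
    (∀ b b' : M, f (b + b') = f b + f b') ∧
    (∀ b b' : M, SM.le b b' → SN.le (f b) (f b'))

/-!
Everything reduces to one observation: the composite `P → M → M'` is ≼-onto, and
`hlift` moves it into the image of `f' ∘ μ̃`, so every `y : M'` satisfies `y ≼ f'(μ̃ b)`
for some `b`. Applied to `y = f' b'` this gives `0 ≼ f'(μ̃ b) (-) f'(b') = f'(μ̃ b (-) b')`,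
and `b' ≼ μ̃ b (-) (μ̃ b (-) b')` holds in any module with negation because `0 ≼ (μ̃ b)°`.
-/

namespace NegModule

variable {M : Type*} [AddCommMonoid M] (S : NegModule M)

theorem neg_add_neg (a b : M) : S.neg (a + S.neg b) = S.neg a + b := by
  rw [S.neg_add, S.neg_neg]

theorem zero_le_add_neg_of_le {a b : M} (h : S.le a b) : S.le 0 (b + S.neg a) :=
  S.le_trans _ _ _ (S.zero_le_circ a) (S.le_add _ _ _ _ h (S.le_refl _))

theorem le_add_neg_add_neg (a b : M) : S.le b (a + S.neg (a + S.neg b)) := by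
  have h := S.le_add _ _ _ _ (S.zero_le_circ a) (S.le_refl b)
  rwa [zero_add, add_assoc, ← S.neg_add_neg] at h

end NegModule

namespace IsNegHom

variable {M N : Type*} [AddCommMonoid M] [AddCommMonoid N]
  {SM : NegModule M} {SN : NegModule N} {f : M → N}

theorem map_neg (hf : IsNegHom SM SN f) (b : M) : f (SM.neg b) = SN.neg (f b) := hf.2.1 b

theorem map_add (hf : IsNegHom SM SN f) (a b : M) : f (a + b) = f a + f b := hf.2.2.1 a b

theorem mono (hf : IsNegHom SM SN f) {a b : M} (h : SM.le a b) : SN.le (f a) (f b) :=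
  hf.2.2.2 a b h

theorem map_add_neg (hf : IsNegHom SM SN f) (a b : M) :
    f (a + SM.neg b) = f a + SN.neg (f b) := by
  rw [hf.map_add, hf.map_neg]

theorem zero_le_map (hf : IsNegHom SM SN f) {b : M} (h : SM.le 0 b) : SN.le 0 (f b) :=
  hf.1 ▸ hf.mono h

end IsNegHom

theorem exists_le_map_lift {P M P' M' : Type*} [AddCommMonoid M] [AddCommMonoid M']
    {SM : NegModule M} {SM' : NegModule M'} {f : P → M} {f' : P' → M'} {μ : M → M'}
    {μt : P → P'} (hμ : IsNegHom SM SM' μ)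
    (hf_onto : ∀ y : M, ∃ x : P, SM.le y (f x))
    (hμ_onto : ∀ y : M', ∃ x : M, SM'.le y (μ x))
    (hlift : ∀ b : P, SM'.le (μ (f b)) (f' (μt b))) (y : M') :
    ∃ b : P, SM'.le y (f' (μt b)) := by
  obtain ⟨x, hx⟩ := hμ_onto y
  obtain ⟨b, hb⟩ := hf_onto x
  exact ⟨b, SM'.le_trans _ _ _ hx (SM'.le_trans _ _ _ (hμ.mono hb) (hlift b))⟩

theorem semi_schanuel_general
    {P M P' M' : Type*} [AddCommMonoid P] [AddCommMonoid M]
    [AddCommMonoid P'] [AddCommMonoid M']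
    (SP : NegModule P) (SM : NegModule M) (SP' : NegModule P')
    (SM' : NegModule M')
    (f : P → M) (f' : P' → M') (μ : M → M') (μt : P → P')
    (hf' : IsNegHom SP' SM' f')
    (hμ : IsNegHom SM SM' μ) (hμt : IsNegHom SP SP' μt)
    (hf_onto : ∀ y : M, ∃ x : P, SM.le y (f x))
    (hμ_onto : ∀ y : M', ∃ x : M, SM'.le y (μ x))
    (hlift : ∀ b : P, SM'.le (μ (f b)) (f' (μt b))) :
    let g : P' × P → P' := fun cb => μt cb.2 + SP'.neg cb.1
    -- (1) g respects addition and negation componentwise ...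
    ((∀ c c' : P', ∀ b b' : P, g (c + c', b + b') = g (c, b) + g (c', b')) ∧
     (∀ (c : P') (b : P), g (SP'.neg c, SP.neg b) = SP'.neg (g (c, b))) ∧
     -- ... and g is ≼-onto via elements μ̃(b)(-)b' of K'
     (∀ b' : P', ∃ b : P,
        SM'.le 0 (f' (μt b + SP'.neg b')) ∧
        SP'.le b' (g (μt b + SP'.neg b', b)))) ∧
    -- (2) Φ(b) = (μ̃(b), b) is a well-defined ≼-isomorphism K → K''
    ((∀ b : P, SM.le 0 (f b) →
        (SM'.le 0 (f' (μt b)) ∧ SP'.le 0 (g (μt b, b)) ∧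
          SP'.le (μt b) (μt b))) ∧
     -- Φ' ∘ Φ = id on K
     (∀ b : P, SM.le 0 (f b) → ((μt b, b) : P' × P).2 = b) ∧
     -- Φ ∘ Φ' ≽ id on K'' (componentwise)
     (∀ (c : P') (b : P),
        SM'.le 0 (f' c) → SP'.le 0 (g (c, b)) → SP'.le c (μt b) →
        SP'.le c (μt b) ∧ SP.le b b)) := by
  refine ⟨⟨fun c c' b b' => ?_, fun c b => ?_, fun b' => ?_⟩,
    fun b hb => ⟨?_, SP'.zero_le_circ _, SP'.le_refl _⟩,
    fun _ _ => rfl, fun _ b _ _ h => ⟨h, SP.le_refl b⟩⟩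
  · simp only [hμt.map_add, SP'.neg_add, add_add_add_comm]
  · simp only [hμt.map_neg, SP'.neg_neg, SP'.neg_add_neg]
  · obtain ⟨b, hb⟩ := exists_le_map_lift hμ hf_onto hμ_onto hlift (f' b')
    refine ⟨b, ?_, SP'.le_add_neg_add_neg _ _⟩
    rw [hf'.map_add_neg]
    exact SM'.zero_le_add_neg_of_le hb
  · exact SM'.le_trans _ _ _ (hμ.zero_le_map hb) (hlift b)

/-- Semi-Schanuel, homomorphic version. -/
theorem semi_schanuel
    {P M P' M' : Type*} [AddCommMonoid P] [AddCommMonoid M]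
    [AddCommMonoid P'] [AddCommMonoid M']
    (SP : NegModule P) (SM : NegModule M) (SP' : NegModule P')
    (SM' : NegModule M')
    (f : P → M) (f' : P' → M') (μ : M → M') (μt : P → P')
    (hf : IsNegHom SP SM f) (hf' : IsNegHom SP' SM' f')
    (hμ : IsNegHom SM SM' μ) (hμt : IsNegHom SP SP' μt)
    (hf_onto : ∀ y : M, ∃ x : P, SM.le y (f x))
    (hf'_onto : ∀ y : M', ∃ x : P', SM'.le y (f' x))
    (hμ_onto : ∀ y : M', ∃ x : M, SM'.le y (μ x))
    (hlift : ∀ b : P, SM'.le (μ (f b)) (f' (μt b))) :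
    let g : P' × P → P' := fun cb => μt cb.2 + SP'.neg cb.1
    -- (1) g respects addition and negation componentwise ...
    ((∀ c c' : P', ∀ b b' : P, g (c + c', b + b') = g (c, b) + g (c', b')) ∧
     (∀ (c : P') (b : P), g (SP'.neg c, SP.neg b) = SP'.neg (g (c, b))) ∧
     -- ... and g is ≼-onto via elements μ̃(b)(-)b' of K'
     (∀ b' : P', ∃ b : P,
        SM'.le 0 (f' (μt b + SP'.neg b')) ∧
        SP'.le b' (g (μt b + SP'.neg b', b)))) ∧
    -- (2) Φ(b) = (μ̃(b), b) is a well-defined ≼-isomorphism K → K''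
    ((∀ b : P, SM.le 0 (f b) →
        (SM'.le 0 (f' (μt b)) ∧ SP'.le 0 (g (μt b, b)) ∧
          SP'.le (μt b) (μt b))) ∧
     -- Φ' ∘ Φ = id on K
     (∀ b : P, SM.le 0 (f b) → ((μt b, b) : P' × P).2 = b) ∧
     -- Φ ∘ Φ' ≽ id on K'' (componentwise)
     (∀ (c : P') (b : P),
        SM'.le 0 (f' c) → SP'.le 0 (g (c, b)) → SP'.le c (μt b) →
        SP'.le c (μt b) ∧ SP.le b b)) :=
  semi_schanuel_general SP SM SP' SM' f f' μ μt hf' hμ hμt hf_onto hμ_onto hlift
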